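/- Let (C, ⊗, 1_C) and (D, ⊗, 1_D) be monoidal categories, and let W_C and W_D be classes of morphisms of C and D respectively, each containing all isomorphisms, closed under composition, and stable under tensoring (for every f in the class and every object X, both X ⊗ f and f ⊗ X lie in the class), so that the localized categories C[W_C⁻¹] and D[W_D⁻¹] carry induced monoidal structures for which the localization functors L_C : C → C[W_C⁻¹] and L_D : D → D[W_D⁻¹] are strong monoidal. Let F : C → D be an oplax monoidal functor such that (i) F sends every morphism of W_C to a morphism of W_D, (ii) for all objects X, Y of C the oplax structure morphism F(X ⊗ Y) → F(X) ⊗ F(Y) lies in W_D, and (iii) the oplax unit morphism F(1_C) → 1_D lies in W_D. Then the functor F̄ : C[W_C⁻¹] → D[W_D⁻¹] induced by L_D ∘ F (i.e. satisfying F̄ ∘ L_C ≅ L_D ∘ F) admits the structure of a strong monoidal functor. -/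

import Mathlib

/-!
Since `L_D` inverts the oplax structure morphisms of `F`, the composite `F ⋙ L_D` is strong
monoidal. `Fbar` lifts it along the monoidal localization functor `L_C`, so the universal
property of monoidal localizations makes `Fbar` monoidal.
-/

open CategoryTheory MonoidalCategory Functor.OplaxMonoidal

namespace CategoryTheory.Functor

variable {C D E : Type*} [Category C] [Category D] [Category E]
  [MonoidalCategory C] [MonoidalCategory D] [MonoidalCategory E]
  (F : C ⥤ D) [F.OplaxMonoidal] (G : D ⥤ E) [G.Monoidal]

instance isIso_η_comp_of_isIso_map_η [IsIso (G.map (η F))] : IsIso (η (F ⋙ G)) := by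
  rw [OplaxMonoidal.comp_η]
  infer_instance

instance isIso_δ_comp_of_isIso_map_δ (X Y : C) [IsIso (G.map (δ F X Y))] :
    IsIso (δ (F ⋙ G) X Y) := by
  rw [OplaxMonoidal.comp_δ]
  infer_instance

end CategoryTheory.Functor

/-- A weak-monoidal-Quillen-type oplax monoidal functor between monoidal
categories, whose oplax structure maps lie in the class of weak equivalences, induces a
strong monoidal structure on the functor between the (monoidal) localizations. -/
theorem oplax_functor_induces_monoidal_on_localizations
    {C : Type u₁} [Category.{v₁} C] [MonoidalCategory C]
    {D : Type u₂} [Category.{v₂} D] [MonoidalCategory D]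
    {C' : Type u₃} [Category.{v₃} C'] [MonoidalCategory C']
    {D' : Type u₄} [Category.{v₄} D'] [MonoidalCategory D']
    (W_C : MorphismProperty C) (W_D : MorphismProperty D)
    -- `W_C` contains all isomorphisms, is closed under composition,
    -- and is stable under tensoring on either side:
    (_ : ∀ {X Y : C} (f : X ⟶ Y), IsIso f → W_C f)
    (_ : ∀ {X Y Z : C} (f : X ⟶ Y) (g : Y ⟶ Z), W_C f → W_C g → W_C (f ≫ g))
    (_ : ∀ (Z : C) {X Y : C} (f : X ⟶ Y), W_C f → W_C (Z ◁ f))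
    (_ : ∀ {X Y : C} (f : X ⟶ Y) (Z : C), W_C f → W_C (f ▷ Z))
    -- likewise for `W_D`:
    (_ : ∀ {X Y : D} (f : X ⟶ Y), IsIso f → W_D f)
    (_ : ∀ {X Y Z : D} (f : X ⟶ Y) (g : Y ⟶ Z), W_D f → W_D g → W_D (f ≫ g))
    (_ : ∀ (Z : D) {X Y : D} (f : X ⟶ Y), W_D f → W_D (Z ◁ f))
    (_ : ∀ {X Y : D} (f : X ⟶ Y) (Z : D), W_D f → W_D (f ▷ Z))
    -- the localization functors, which are strong monoidal:
    (L_C : C ⥤ C') [L_C.IsLocalization W_C] [L_C.Monoidal]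
    (L_D : D ⥤ D') [L_D.IsLocalization W_D] [L_D.Monoidal]
    -- the oplax monoidal functor `F`:
    (F : C ⥤ D) [F.OplaxMonoidal]
    -- (i) `F` sends `W_C` into `W_D`:
    (_ : ∀ {X Y : C} (f : X ⟶ Y), W_C f → W_D (F.map f))
    -- (ii) the oplax structure morphisms `F(X ⊗ Y) ⟶ F X ⊗ F Y` lie in `W_D`:
    (_ : ∀ X Y : C, W_D (Functor.OplaxMonoidal.δ F X Y))
    -- (iii) the oplax unit morphism `F(𝟙_ C) ⟶ 𝟙_ D` lies in `W_D`:
    (_ : W_D (Functor.OplaxMonoidal.η F))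
    -- the induced functor on localizations:
    (Fbar : C' ⥤ D') (_ : L_C ⋙ Fbar ≅ F ⋙ L_D) :
    Nonempty Fbar.Monoidal := by
  have : W_C.ContainsIdentities :=
    ⟨fun X => ‹∀ {X Y : C} (f : X ⟶ Y), IsIso f → W_C f› (𝟙 X) inferInstance⟩
  have := Localization.inverts L_D W_D _ ‹W_D (η F)›
  have := fun X Y => Localization.inverts L_D W_D _ (‹∀ X Y : C, W_D (δ F X Y)› X Y)
  let := Functor.Monoidal.ofOplaxMonoidal (F ⋙ L_D)
  let : Localization.Lifting L_C W_C (F ⋙ L_D) Fbar := ⟨‹L_C ⋙ Fbar ≅ F ⋙ L_D›⟩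
  exact ⟨Localization.Monoidal.functorMonoidalOfComp L_C W_C Fbar (F ⋙ L_D)⟩
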